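/- arXiv:2208.04672 — 3 statements merged into one kernel-verified Lean document; each statement's English description precedes it below -/
import Mathlib

section
/- On the unit sphere S² with the intrinsic (great-circle) metric, let K be a geodesic arc of length t with 0 < t < π. Then sup over z ∈ S² of dist(z, K) equals π − t/2. -/
open Real

local notation "⟪" x ", " y "⟫" => inner (𝕜 := ℝ) x y

/-- Intrinsic (great-circle) distance on the unit sphere in ℝ³. -/
noncomputable def sphereDist (x y : EuclideanSpace ℝ (Fin 3)) : ℝ :=
  Real.arccos ⟪x, y⟫

theorem sup_dist_to_geodesic_arc
    (e₁ e₂ : EuclideanSpace ℝ (Fin 3)) (he₁ : ‖e₁‖ = 1) (he₂ : ‖e₂‖ = 1)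
    (horth : ⟪e₁, e₂⟫ = 0) (t : ℝ) (ht₀ : 0 < t) (htπ : t < π)
    (K : Set (EuclideanSpace ℝ (Fin 3)))
    (hK : K = {p | ∃ φ : ℝ, |φ| ≤ t / 2 ∧ p = Real.cos φ • e₁ + Real.sin φ • e₂}) :
    sSup {d : ℝ | ∃ z : EuclideanSpace ℝ (Fin 3), ‖z‖ = 1 ∧
        d = sInf {s : ℝ | ∃ w ∈ K, s = sphereDist z w}} = π - t / 2 := by
  have ht2 : 0 < t / 2 := by linarith
  have ht2π : t / 2 < π / 2 := by linarith
  have hπpos := Real.pi_pos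
  have hcosnn : 0 ≤ Real.cos (t / 2) :=
    Real.cos_nonneg_of_mem_Icc ⟨by linarith, by linarith⟩
  have hsinnn : 0 ≤ Real.sin (t / 2) :=
    Real.sin_nonneg_of_nonneg_of_le_pi (by linarith) (by linarith)
  have hinner : ∀ (z : EuclideanSpace ℝ (Fin 3)) (φ : ℝ),
      ⟪z, Real.cos φ • e₁ + Real.sin φ • e₂⟫
        = Real.cos φ * ⟪z, e₁⟫ + Real.sin φ * ⟪z, e₂⟫ := by
    intro z φ
    rw [inner_add_right, real_inner_smul_right, real_inner_smul_right]
  -- each distance set is bounded below by 0 and nonempty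
  have hbdd0 : ∀ z : EuclideanSpace ℝ (Fin 3),
      ∀ s ∈ {s : ℝ | ∃ w ∈ K, s = sphereDist z w}, (0 : ℝ) ≤ s := by
    rintro z s ⟨w, hw, rfl⟩
    exact Real.arccos_nonneg _
  -- upper bound: every element of the sup set is ≤ π - t/2
  have hub : ∀ d ∈ {d : ℝ | ∃ z : EuclideanSpace ℝ (Fin 3), ‖z‖ = 1 ∧
      d = sInf {s : ℝ | ∃ w ∈ K, s = sphereDist z w}}, d ≤ π - t / 2 := by
    rintro d ⟨z, hz, rfl⟩
    set a := ⟪z, e₁⟫ with ha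
    set b := ⟪z, e₂⟫ with hb
    have hab : -1 ≤ a := by
      have := abs_real_inner_le_norm z e₁
      rw [hz, he₁] at this
      have : |⟪z, e₁⟫| ≤ 1 := by simpa using this
      linarith [neg_abs_le (⟪z, e₁⟫ : ℝ)]
    set φ : ℝ := if 0 ≤ b then t / 2 else -(t / 2) with hφ
    have hφabs : |φ| ≤ t / 2 := by
      rcases le_or_gt 0 b with h | h
      · simp [hφ, h, abs_of_pos ht2]
      · simp [hφ, not_le.2 h, abs_of_pos ht2]
    have hwK : Real.cos φ • e₁ + Real.sin φ • e₂ ∈ K := by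
      rw [hK]; exact ⟨φ, hφabs, rfl⟩
    have hval : -Real.cos (t / 2) ≤ ⟪z, Real.cos φ • e₁ + Real.sin φ • e₂⟫ := by
      rw [hinner]
      have h1 : -Real.cos (t / 2) ≤ Real.cos φ * a := by
        have hcφ : Real.cos φ = Real.cos (t / 2) := by
          rcases le_or_gt 0 b with h | h
          · simp [hφ, h]
          · simp [hφ, not_le.2 h]
        rw [hcφ]
        nlinarith
      have h2 : 0 ≤ Real.sin φ * b := by
        rcases le_or_gt 0 b with h | h
        · have : Real.sin φ = Real.sin (t / 2) := by simp [hφ, h]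
          rw [this]; exact mul_nonneg hsinnn h
        · have : Real.sin φ = -Real.sin (t / 2) := by simp [hφ, not_le.2 h]
          rw [this]
          nlinarith
      linarith
    have hdist : sphereDist z (Real.cos φ • e₁ + Real.sin φ • e₂) ≤ π - t / 2 := by
      unfold sphereDist
      have := Real.arccos_le_pi (⟪z, Real.cos φ • e₁ + Real.sin φ • e₂⟫)
      calc Real.arccos ⟪z, Real.cos φ • e₁ + Real.sin φ • e₂⟫
          ≤ Real.arccos (-Real.cos (t / 2)) := by
            unfold Real.arccos
            have := Real.monotone_arcsin hval
            linarith
        _ = π - t / 2 := by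
            rw [Real.arccos_neg, Real.arccos_cos (by linarith) (by linarith)]
    calc sInf {s : ℝ | ∃ w ∈ K, s = sphereDist z w}
        ≤ sphereDist z (Real.cos φ • e₁ + Real.sin φ • e₂) :=
          csInf_le ⟨0, hbdd0 z⟩ ⟨_, hwK, rfl⟩
      _ ≤ π - t / 2 := hdist
  apply le_antisymm
  · exact Real.sSup_le hub (by linarith)
  · -- witness z = -e₁
    have hinnerneg : ∀ φ : ℝ, ⟪-e₁, Real.cos φ • e₁ + Real.sin φ • e₂⟫ = -Real.cos φ := by
      intro φ
      rw [hinner]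
      have h11 : ⟪-e₁, e₁⟫ = (-1 : ℝ) := by
        rw [inner_neg_left, real_inner_self_eq_norm_sq, he₁]; norm_num
      have h12 : ⟪-e₁, e₂⟫ = (0 : ℝ) := by
        rw [inner_neg_left, horth]; norm_num
      rw [h11, h12]; ring
    have hmem : (π - t / 2) ∈ {d : ℝ | ∃ z : EuclideanSpace ℝ (Fin 3), ‖z‖ = 1 ∧
        d = sInf {s : ℝ | ∃ w ∈ K, s = sphereDist z w}} := by
      refine ⟨-e₁, by simpa using he₁, ?_⟩
      have hdφ : ∀ φ : ℝ, |φ| ≤ t / 2 →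
          sphereDist (-e₁) (Real.cos φ • e₁ + Real.sin φ • e₂) = π - |φ| := by
        intro φ hφ
        unfold sphereDist
        rw [hinnerneg φ, ← Real.cos_abs, Real.arccos_neg,
          Real.arccos_cos (abs_nonneg φ) (by linarith)]
      apply le_antisymm
      · apply le_csInf
        · refine ⟨π - t / 2, Real.cos (t/2) • e₁ + Real.sin (t/2) • e₂, ?_, ?_⟩
          · rw [hK]; exact ⟨t / 2, by rw [abs_of_pos ht2], rfl⟩
          · rw [hdφ (t/2) (by rw [abs_of_pos ht2])]
            rw [abs_of_pos ht2]
        · rintro s ⟨w, hw, rfl⟩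
          rw [hK] at hw
          obtain ⟨φ, hφ, rfl⟩ := hw
          rw [hdφ φ hφ]
          linarith
      · apply csInf_le ⟨0, hbdd0 _⟩
        refine ⟨Real.cos (t/2) • e₁ + Real.sin (t/2) • e₂, ?_, ?_⟩
        · rw [hK]; exact ⟨t / 2, by rw [abs_of_pos ht2], rfl⟩
        · rw [hdφ (t/2) (by rw [abs_of_pos ht2]), abs_of_pos ht2]
    exact le_csSup ⟨π - t / 2, hub⟩ hmem
end

section
/- Let u : ℂ → ℝ be concave, suppose u(0) > 0, and suppose there is c > 0 such that the half-plane H = {z : Re z < −c} satisfies u(z) < 0 for all z ∈ H. Then for every ε > 0 there exist constants k > 0 and r₀ > 0 such that u(r·e^{iθ}) ≤ −k·r for all r > r₀ and all θ with |θ − π| ≤ π/2 − ε. -/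
set_option maxHeartbeats 1000000

open Real Complex

theorem concave_linear_decay_in_sector (u : ℂ → ℝ) (c : ℝ) (hc : 0 < c)
    (hconc : ConcaveOn ℝ Set.univ u)
    (h0 : 0 < u 0)
    (hneg : ∀ z : ℂ, z.re < -c → u z < 0) :
    ∀ ε > 0, ∃ k > 0, ∃ r₀ > 0, ∀ r : ℝ, r > r₀ → ∀ θ : ℝ, |θ - π| ≤ π / 2 - ε →
      u ((r : ℂ) * Complex.exp (θ * Complex.I)) ≤ -k * r := by
  intro ε hε
  have hπ := Real.pi_pos
  set ε' := min ε (π/4) with hε'def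
  have hε'pos : 0 < ε' := lt_min hε (by positivity)
  have hε'le : ε' ≤ π/4 := min_le_right _ _
  set s := Real.sin ε' with hsdef
  have hspos : 0 < s := Real.sin_pos_of_pos_of_lt_pi hε'pos (by linarith)
  have hsle : s ≤ 1 := Real.sin_le_one _
  refine ⟨u 0 * s / (4*c), by positivity, 4*c/s, by positivity, ?_⟩
  intro r hr θ hθ
  have hr0 : 0 < r := lt_trans (by positivity) hr
  have hrs : 4*c < r * s := by
    have := (div_lt_iff₀ hspos).mp hr
    linarith
  set z := (r:ℂ) * Complex.exp (θ * Complex.I) with hzdef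
  have hzre : z.re = r * Real.cos θ := by
    rw [hzdef, Complex.exp_mul_I]
    simp [Complex.cos_ofReal_re, Complex.sin_ofReal_re]
  -- cos θ ≤ -s
  have hcos : Real.cos θ ≤ -s := by
    have h1 : Real.cos θ = -Real.cos (θ - π) := by
      rw [show θ = (θ - π) + π by ring, Real.cos_add_pi]
      ring_nf
    have h2 : Real.cos (π/2 - ε') ≤ Real.cos (θ - π) := by
      rw [← Real.cos_abs (θ - π)]
      apply Real.cos_le_cos_of_nonneg_of_le_pi (abs_nonneg _) (by linarith)
      calc |θ - π| ≤ π/2 - ε := hθ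
        _ ≤ π/2 - ε' := by have := min_le_left ε (π/4); linarith
    rw [Real.cos_pi_div_two_sub] at h2
    rw [h1]
    linarith
  have hzre_le : z.re ≤ -(r * s) := by
    rw [hzre]
    nlinarith
  have hzre_neg : 0 < -z.re := by nlinarith
  set t := 2*c / (-z.re) with htdef
  have ht0 : 0 < t := by positivity
  have ht_half : t ≤ 1/2 := by
    rw [htdef, div_le_iff₀ hzre_neg]
    nlinarith
  have ht1 : t ≤ 1 := by linarith
  -- concavity
  have hkey := hconc.2 (Set.mem_univ z) (Set.mem_univ (0:ℂ)) (le_of_lt ht0)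
    (by linarith : (0:ℝ) ≤ 1 - t) (by ring)
  have hw : t • z + (1 - t) • (0:ℂ) = t • z := by simp
  rw [hw] at hkey
  have hwre : (t • z).re = -(2*c) := by
    have hne : z.re ≠ 0 := ne_of_lt (by linarith)
    rw [Complex.real_smul, Complex.re_ofReal_mul, htdef]
    field_simp
  have hwneg : u (t • z) < 0 := hneg _ (by rw [hwre]; linarith)
  have h1 : t * u z + (1 - t) * u 0 < 0 := by
    calc t * u z + (1 - t) * u 0 = t • u z + (1 - t) • u 0 := rfl
      _ ≤ u (t • z) := hkey
      _ < 0 := hwneg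
  have h2 : t * u z ≤ -(u 0)/2 := by nlinarith
  -- t ≤ 2c/(r*s)
  have ht_ub : t ≤ 2*c/(r*s) := by
    rw [htdef]
    apply div_le_div_of_nonneg_left (by linarith) (by positivity)
    linarith
  have huz_neg : u z < 0 := by nlinarith
  have h3 : (2*c/(r*s)) * u z ≤ -(u 0)/2 := by
    have : (2*c/(r*s)) * u z ≤ t * u z := by nlinarith
    linarith
  -- conclude
  rw [div_mul_eq_mul_div, div_le_iff₀ (by positivity : (0:ℝ) < r*s)] at h3
  have h4c : (0:ℝ) < 4*c := by linarith
  rw [neg_mul, le_neg, show u 0 * s / (4*c) * r = (u 0 * s * r)/(4*c) by ring,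
    div_le_iff₀ h4c]
  nlinarith
end

section
/- Let u : ℂ → ℝ be concave and let S^+ ⊆ (0, 2π) be the set of directions θ such that there is a sequence z_n → ∞ with arg z_n → θ and log⁺(−u(z_n))/log|z_n| → ∞ (directions of fast decrease). If θ₀ ∈ (θ₁, θ₂) with |θ₂ − θ₁| < π and θ₀ is a direction of fast decrease, then θ₁ or θ₂ is also a direction of fast decrease. -/
open Real Complex Filter

/-- `θ` is a direction of fast decrease for `u`: there is a sequence `zₙ = rₙ e^{i φₙ} → ∞`
with `φₙ → θ` and `log⁺(−u(zₙ)) / log rₙ → ∞`. -/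
def FastDecreaseDir (u : ℂ → ℝ) (θ : ℝ) : Prop :=
  ∃ r φ : ℕ → ℝ,
    Tendsto r atTop atTop ∧
    Tendsto φ atTop (nhds θ) ∧
    Tendsto (fun n =>
      max (Real.log (-(u ((r n : ℂ) * Complex.exp (φ n * Complex.I))))) 0 / Real.log (r n))
      atTop atTop

/-!
Eventually `zₙ = rₙ e^{iφₙ}` lies in the sector `θ₁ ≤ arg ≤ θ₂`, whose opening is less than `π`,
so `zₙ` lies on the chord joining `ρₙ e^{iθ₁}` and `ρₙ e^{iθ₂}` for some `rₙ ≤ ρₙ ≤ C rₙ`.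
A concave function grows at most linearly, so `u (zₙ) < 0` eventually, and by concavity `u` is
at most `u (zₙ)` at one of the two endpoints. There `log⁺ (-u)` is at least `log⁺ (-u (zₙ))`
while `log ρₙ ≤ 2 log rₙ`, so the decay ratio at that endpoint is at least half the one at `zₙ`;
one of the two rays is chosen infinitely often.
-/

open Set

theorem ConcaveOn.exists_le_mul_norm {E : Type*} [NormedAddCommGroup E] [NormedSpace ℝ E]
    [FiniteDimensional ℝ E] {u : E → ℝ} (hu : ConcaveOn ℝ univ u) :
    ∃ C, ∀ z, 1 ≤ ‖z‖ → u z ≤ C * ‖z‖ := by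
  obtain ⟨M, hM⟩ :=
    (isCompact_closedBall (0 : E) 1).bddAbove_image hu.locallyLipschitz.continuous.continuousOn
  refine ⟨M + |u 0|, fun z hz => ?_⟩
  set R := ‖z‖
  have hR : 0 < R := by linarith
  have hball : R⁻¹ • z ∈ Metric.closedBall 0 1 := by
    simp [norm_smul, R, hR.ne']
  have hseg : R⁻¹ * u z + (1 - R⁻¹) * u 0 ≤ u (R⁻¹ • z) := by
    simpa using hu.2 (mem_univ z) (mem_univ 0) (inv_nonneg.2 hR.le)
      (sub_nonneg.2 (inv_le_one_of_one_le₀ hz)) (by ring)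
  have hmax : u (R⁻¹ • z) ≤ M := hM ⟨_, hball, rfl⟩
  have hz' : u z ≤ R * M - (R - 1) * u 0 := by
    have := mul_le_mul_of_nonneg_left (hseg.trans hmax) hR.le
    field_simp at this
    linarith
  nlinarith [neg_abs_le (u 0), abs_nonneg (u 0)]

noncomputable def decayRatio (u : ℂ → ℝ) (r φ : ℝ) : ℝ :=
  log⁺ (-u (r * exp (φ * I))) / Real.log r

theorem fastDecreaseDir_iff {u : ℂ → ℝ} {θ : ℝ} :
    FastDecreaseDir u θ ↔ ∃ r φ : ℕ → ℝ, Tendsto r atTop atTop ∧ Tendsto φ atTop (nhds θ) ∧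
      Tendsto (fun n => decayRatio u (r n) (φ n)) atTop atTop := by
  simp only [FastDecreaseDir, decayRatio, Real.posLog_apply, max_comm]

theorem sin_mul_exp_add_sin_mul_exp (θ₁ θ₂ φ : ℝ) :
    (Real.sin (θ₂ - φ) : ℂ) * exp (θ₁ * I) + Real.sin (φ - θ₁) * exp (θ₂ * I) =
      Real.sin (θ₂ - θ₁) * exp (φ * I) := by
  simp only [← ofReal_cos, ← ofReal_sin, exp_mul_I, Real.sin_sub]
  push_cast
  ring

theorem Real.sin_add_le_sin_add_sin {a b : ℝ} (ha : 0 ≤ Real.sin a) (hb : 0 ≤ Real.sin b) :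
    Real.sin (a + b) ≤ Real.sin a + Real.sin b := by
  rw [Real.sin_add]
  nlinarith [Real.cos_le_one a, Real.cos_le_one b]

-- Writing `r e^{iφ} = s e^{iθ₁} + t e^{iθ₂}` with `s, t ≥ 0` (law of sines, see
-- `sin_mul_exp_add_sin_mul_exp`), `r e^{iφ}` lies on the chord joining `(s + t) e^{iθ₁}` and
-- `(s + t) e^{iθ₂}`, and `chordRadius θ₁ θ₂ r φ = s + t`.
noncomputable def chordRadius (θ₁ θ₂ r φ : ℝ) : ℝ :=
  r * (Real.sin (θ₂ - φ) + Real.sin (φ - θ₁)) / Real.sin (θ₂ - θ₁)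

section chordRadius

variable {θ₁ θ₂ φ : ℝ}

theorem sin_sub_nonneg_of_mem_Icc (hφ : φ ∈ Icc θ₁ θ₂) (hπ : θ₂ - θ₁ < π) :
    0 ≤ Real.sin (θ₂ - φ) ∧ 0 ≤ Real.sin (φ - θ₁) :=
  ⟨Real.sin_nonneg_of_nonneg_of_le_pi (by linarith [hφ.2]) (by linarith [hφ.1]),
    Real.sin_nonneg_of_nonneg_of_le_pi (by linarith [hφ.1]) (by linarith [hφ.2])⟩

theorem le_chordRadius {r : ℝ} (hr : 0 ≤ r) (hφ : φ ∈ Icc θ₁ θ₂) (hθ : θ₁ < θ₂)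
    (hπ : θ₂ - θ₁ < π) : r ≤ chordRadius θ₁ θ₂ r φ := by
  have hS : 0 < Real.sin (θ₂ - θ₁) := Real.sin_pos_of_pos_of_lt_pi (by linarith) hπ
  obtain ⟨h₂, h₁⟩ := sin_sub_nonneg_of_mem_Icc hφ hπ
  have := Real.sin_add_le_sin_add_sin h₂ h₁
  rw [show θ₂ - φ + (φ - θ₁) = θ₂ - θ₁ by ring] at this
  rw [chordRadius, le_div_iff₀ hS]
  exact mul_le_mul_of_nonneg_left this hr

theorem chordRadius_le {r : ℝ} (hr : 0 ≤ r) (hθ : θ₁ < θ₂) (hπ : θ₂ - θ₁ < π) :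
    chordRadius θ₁ θ₂ r φ ≤ 2 / Real.sin (θ₂ - θ₁) * r := by
  have hS : 0 < Real.sin (θ₂ - θ₁) := Real.sin_pos_of_pos_of_lt_pi (by linarith) hπ
  rw [chordRadius, div_mul_eq_mul_div, div_le_div_iff_of_pos_right hS, mul_comm 2]
  gcongr
  linarith [Real.sin_le_one (θ₂ - φ), Real.sin_le_one (φ - θ₁)]

theorem mem_segment_chordRadius (r : ℝ) (hφ : φ ∈ Icc θ₁ θ₂) (hθ : θ₁ < θ₂)
    (hπ : θ₂ - θ₁ < π) :
    (r * exp (φ * I) : ℂ) ∈ segment ℝ (chordRadius θ₁ θ₂ r φ * exp (θ₁ * I))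
      (chordRadius θ₁ θ₂ r φ * exp (θ₂ * I)) := by
  have hS : 0 < Real.sin (θ₂ - θ₁) := Real.sin_pos_of_pos_of_lt_pi (by linarith) hπ
  obtain ⟨h₂, h₁⟩ := sin_sub_nonneg_of_mem_Icc hφ hπ
  have hsum : 0 < Real.sin (θ₂ - φ) + Real.sin (φ - θ₁) :=
    hS.trans_le (by simpa using Real.sin_add_le_sin_add_sin h₂ h₁)
  refine mem_segment_iff_div.2 ⟨_, _, h₂, h₁, hsum, ?_⟩
  have key := sin_mul_exp_add_sin_mul_exp θ₁ θ₂ φ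
  simp only [chordRadius, Complex.real_smul, ofReal_div, ofReal_mul, ofReal_add]
  generalize Real.sin (θ₂ - φ) = a, Real.sin (φ - θ₁) = b, Real.sin (θ₂ - θ₁) = S at *
  have hab : (a : ℂ) + b ≠ 0 := by exact_mod_cast hsum.ne'
  have hS' : (S : ℂ) ≠ 0 := by exact_mod_cast hS.ne'
  calc _ = (r / S : ℂ) * (a * exp (θ₁ * I) + b * exp (θ₂ * I)) := by field_simp
    _ = r * exp (φ * I) := by rw [key]; field_simp

end chordRadius

section decayRatio

variable {u : ℂ → ℝ}

theorem decayRatio_half_le_of_le {r φ ρ θ : ℝ} (hr : 1 < r) (hrρ : r ≤ ρ)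
    (hρ : Real.log ρ ≤ 2 * Real.log r) (hneg : u (r * exp (φ * I)) < 0)
    (hle : u (ρ * exp (θ * I)) ≤ u (r * exp (φ * I))) :
    decayRatio u r φ / 2 ≤ decayRatio u ρ θ := by
  have hlogρ : 0 < Real.log ρ := Real.log_pos (hr.trans_le hrρ)
  unfold decayRatio
  calc log⁺ (-u (r * exp (φ * I))) / Real.log r / 2
      = log⁺ (-u (r * exp (φ * I))) / (2 * Real.log r) := by rw [div_div, mul_comm (Real.log r)]
    _ ≤ log⁺ (-u (r * exp (φ * I))) / Real.log ρ :=
      div_le_div_of_nonneg_left Real.posLog_nonneg hlogρ hρ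
    _ ≤ log⁺ (-u (ρ * exp (θ * I))) / Real.log ρ :=
      div_le_div_of_nonneg_right
        (Real.posLog_le_posLog (neg_nonneg.2 hneg.le) (neg_le_neg hle)) hlogρ.le

theorem ConcaveOn.decayRatio_half_le_or (hu : ConcaveOn ℝ univ u) {θ₁ θ₂ r φ : ℝ}
    (hφ : φ ∈ Icc θ₁ θ₂) (hθ : θ₁ < θ₂) (hπ : θ₂ - θ₁ < π)
    (hr : 2 / Real.sin (θ₂ - θ₁) ≤ r) (hneg : u (r * exp (φ * I)) < 0) :
    decayRatio u r φ / 2 ≤ decayRatio u (chordRadius θ₁ θ₂ r φ) θ₁ ∨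
      decayRatio u r φ / 2 ≤ decayRatio u (chordRadius θ₁ θ₂ r φ) θ₂ := by
  have hS : 0 < Real.sin (θ₂ - θ₁) := Real.sin_pos_of_pos_of_lt_pi (by linarith) hπ
  have hr1 : 1 < r := by
    have : 1 < 2 / Real.sin (θ₂ - θ₁) := by
      rw [lt_div_iff₀ hS]; linarith [Real.sin_le_one (θ₂ - θ₁)]
    linarith
  have hrρ : r ≤ chordRadius θ₁ θ₂ r φ := le_chordRadius (by linarith) hφ hθ hπ
  have hlog : Real.log (chordRadius θ₁ θ₂ r φ) ≤ 2 * Real.log r := by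
    rw [two_mul, ← Real.log_mul (by positivity) (by positivity)]
    refine Real.log_le_log (by linarith) ((chordRadius_le (by linarith) hθ hπ).trans ?_)
    gcongr
  have hmin := hu.min_le_of_mem_segment (mem_univ _) (mem_univ _)
    (mem_segment_chordRadius r hφ hθ hπ)
  rcases min_le_iff.1 hmin with hle | hle
  · exact .inl (decayRatio_half_le_of_le hr1 hrρ hlog hneg hle)
  · exact .inr (decayRatio_half_le_of_le hr1 hrρ hlog hneg hle)

theorem ConcaveOn.eventually_neg_of_tendsto_decayRatio (hu : ConcaveOn ℝ univ u) {ι : Type*}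
    {l : Filter ι} {r φ : ι → ℝ} (hr : Tendsto r l atTop)
    (hdecay : Tendsto (fun i => decayRatio u (r i) (φ i)) l atTop) :
    ∀ᶠ i in l, u (r i * exp (φ i * I)) < 0 := by
  obtain ⟨C, hC⟩ := hu.exists_le_mul_norm
  filter_upwards [hr.eventually_ge_atTop (max 2 |C|), hdecay.eventually_gt_atTop 2]
    with i hri hdi
  have hr2 : 2 ≤ r i := le_of_max_le_left hri
  by_contra! hnonneg
  have hnorm : ‖(r i * exp (φ i * I) : ℂ)‖ = r i := by
    rw [norm_mul, norm_exp_ofReal_mul_I, mul_one, norm_real, Real.norm_of_nonneg (by linarith)]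
  -- linear growth of `u` caps `log⁺ |u|` by `2 log r` wherever `u ≥ 0`
  have hbound : u (r i * exp (φ i * I)) ≤ r i * r i := by
    have := hC _ (by rw [hnorm]; linarith)
    rw [hnorm] at this
    nlinarith [le_abs_self C, le_of_max_le_right hri]
  have : decayRatio u (r i) (φ i) ≤ 2 := by
    rw [decayRatio, div_le_iff₀ (Real.log_pos (by linarith)), Real.posLog_neg, two_mul,
      ← Real.log_mul (by linarith) (by linarith),
      ← Real.posLog_eq_log (by rw [abs_of_nonneg (by positivity)]; nlinarith)]
    exact Real.posLog_le_posLog hnonneg hbound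
  linarith

theorem fastDecreaseDir_of_frequently {θ : ℝ} {ρ F : ℕ → ℝ} (hρ : Tendsto ρ atTop atTop)
    (hF : Tendsto F atTop atTop) (h : ∃ᶠ n in atTop, F n ≤ decayRatio u (ρ n) θ) :
    FastDecreaseDir u θ := by
  obtain ⟨g, hg, hFg⟩ := extraction_of_frequently_atTop h
  exact fastDecreaseDir_iff.2 ⟨ρ ∘ g, fun _ => θ, hρ.comp hg.tendsto_atTop, tendsto_const_nhds,
    tendsto_atTop_mono hFg (hF.comp hg.tendsto_atTop)⟩

end decayRatio

theorem fast_decrease_spreads_to_endpoints (u : ℂ → ℝ)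
    (hconc : ConcaveOn ℝ Set.univ u)
    (θ₀ θ₁ θ₂ : ℝ) (h₁ : θ₁ < θ₀) (h₂ : θ₀ < θ₂) (hlt : θ₂ - θ₁ < π)
    (h₀ : FastDecreaseDir u θ₀) :
    FastDecreaseDir u θ₁ ∨ FastDecreaseDir u θ₂ := by
  obtain ⟨r, φ, hr, hφ, hdecay⟩ := fastDecreaseDir_iff.1 h₀
  have hθ : θ₁ < θ₂ := h₁.trans h₂
  have hsector : ∀ᶠ n in atTop, φ n ∈ Icc θ₁ θ₂ := hφ.eventually (Icc_mem_nhds h₁ h₂)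
  have hρ : Tendsto (fun n => chordRadius θ₁ θ₂ (r n) (φ n)) atTop atTop := by
    refine tendsto_atTop_mono' atTop ?_ hr
    filter_upwards [hsector, hr.eventually_ge_atTop 0] with n hn hrn
    exact le_chordRadius hrn hn hθ hlt
  have hendpoint : ∀ᶠ n in atTop,
      decayRatio u (r n) (φ n) / 2 ≤ decayRatio u (chordRadius θ₁ θ₂ (r n) (φ n)) θ₁ ∨
        decayRatio u (r n) (φ n) / 2 ≤ decayRatio u (chordRadius θ₁ θ₂ (r n) (φ n)) θ₂ := by
    filter_upwards [hsector, hr.eventually_ge_atTop (2 / Real.sin (θ₂ - θ₁)),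
      hconc.eventually_neg_of_tendsto_decayRatio hr hdecay] with n hn hrn hneg
    exact hconc.decayRatio_half_le_or hn hθ hlt hrn hneg
  have hhalf := hdecay.atTop_div_const (two_pos : (0 : ℝ) < 2)
  rcases frequently_or_distrib.1 hendpoint.frequently with h | h
  · exact .inl (fastDecreaseDir_of_frequently hρ hhalf h)
  · exact .inr (fastDecreaseDir_of_frequently hρ hhalf h)
end
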